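/- For smooth vector fields u on a domain in R^3 and a smooth velocity field β, the magnetic advection operator L_β u = -β × (∇ × u) + ∇(β · u) and its formal dual 𝓛_β u = ∇ × (β × u) - β (∇ · u) satisfy the pointwise identity L_β u + 𝓛_β u = -(∇·β) u + (∇β + (∇β)^T) u. -/

import Mathlib

open Matrix

/-- Gradient of a scalar field on `ℝ³`. -/
noncomputable def vgrad (f : (Fin 3 → ℝ) → ℝ) (x : Fin 3 → ℝ) : Fin 3 → ℝ :=
  fun i => fderiv ℝ f x (Pi.single i 1)

/-- Curl of a vector field on `ℝ³`. -/
noncomputable def vcurl (F : (Fin 3 → ℝ) → (Fin 3 → ℝ)) (x : Fin 3 → ℝ) : Fin 3 → ℝ :=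
  ![fderiv ℝ F x (Pi.single 1 1) 2 - fderiv ℝ F x (Pi.single 2 1) 1,
    fderiv ℝ F x (Pi.single 2 1) 0 - fderiv ℝ F x (Pi.single 0 1) 2,
    fderiv ℝ F x (Pi.single 0 1) 1 - fderiv ℝ F x (Pi.single 1 1) 0]

/-- Divergence of a vector field on `ℝ³`. -/
noncomputable def vdiv (F : (Fin 3 → ℝ) → (Fin 3 → ℝ)) (x : Fin 3 → ℝ) : ℝ :=
  ∑ j, fderiv ℝ F x (Pi.single j 1) j

/-- Jacobian matrix `(∇F)_{ij} = ∂_j F_i` of a vector field on `ℝ³`. -/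
noncomputable def vjac (F : (Fin 3 → ℝ) → (Fin 3 → ℝ)) (x : Fin 3 → ℝ) :
    Matrix (Fin 3) (Fin 3) ℝ :=
  Matrix.of fun i j => fderiv ℝ F x (Pi.single j 1) i

/-- The magnetic advection operator `L_β u = -β × (∇×u) + ∇(β·u)`. -/
noncomputable def magAdv (β u : (Fin 3 → ℝ) → (Fin 3 → ℝ)) (x : Fin 3 → ℝ) : Fin 3 → ℝ :=
  -((β x) ⨯₃ (vcurl u x)) + vgrad (fun y => β y ⬝ᵥ u y) x

/-- The formal dual operator `𝓛_β u = ∇ × (β × u) - β (∇·u)`. -/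
noncomputable def magAdvDual (β u : (Fin 3 → ℝ) → (Fin 3 → ℝ)) (x : Fin 3 → ℝ) : Fin 3 → ℝ :=
  vcurl (fun y => (β y) ⨯₃ (u y)) x - (vdiv u x) • β x

/-!
The three operators see the fields only through their values and Jacobians `J = ∇u`, `K = ∇β`
at the point. The product rule gives `∇(β · u) = Jᵀβ + Kᵀu` and `∇(β × u) = [β]ₓ J - [u]ₓ K`,
where `[a]ₓ` is the matrix of `a × ·`. The identity then reduces to two facts of linear algebra
in `ℝ³`: `a × curl A = Aᵀa - Aa` and `curl ([a]ₓ A) = (tr A) a - Aa`.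
-/

section BilinearProductRule

variable {𝕜 E F G H : Type*} [NontriviallyNormedField 𝕜] [CompleteSpace 𝕜]
  [NormedAddCommGroup E] [NormedSpace 𝕜 E] [FiniteDimensional 𝕜 E]
  [NormedAddCommGroup F] [NormedSpace 𝕜 F] [FiniteDimensional 𝕜 F]
  [NormedAddCommGroup G] [NormedSpace 𝕜 G] [NormedAddCommGroup H] [NormedSpace 𝕜 H]

theorem LinearMap.fderiv_of_bilinear_apply (B : E →ₗ[𝕜] F →ₗ[𝕜] G) {f : H → E} {g : H → F}
    {x : H} (hf : DifferentiableAt 𝕜 f x) (hg : DifferentiableAt 𝕜 g x) (v : H) :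
    fderiv 𝕜 (fun y => B (f y) (g y)) x v =
      B (f x) (fderiv 𝕜 g x v) + B (fderiv 𝕜 f x v) (g x) := by
  have h := B.toContinuousBilinearMap.fderiv_of_bilinear hf hg
  simpa using congr($h v)

end BilinearProductRule

section ProductRules

variable {H : Type*} [NormedAddCommGroup H] [NormedSpace ℝ H] {f g : H → Fin 3 → ℝ} {x : H}

theorem fderiv_crossProduct_apply (hf : DifferentiableAt ℝ f x) (hg : DifferentiableAt ℝ g x)
    (v : H) :
    fderiv ℝ (fun y => f y ⨯₃ g y) x v = f x ⨯₃ fderiv ℝ g x v + fderiv ℝ f x v ⨯₃ g x :=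
  (crossProduct (R := ℝ)).fderiv_of_bilinear_apply hf hg v

theorem fderiv_dotProduct_apply (hf : DifferentiableAt ℝ f x) (hg : DifferentiableAt ℝ g x)
    (v : H) :
    fderiv ℝ (fun y => f y ⬝ᵥ g y) x v = f x ⬝ᵥ fderiv ℝ g x v + fderiv ℝ f x v ⬝ᵥ g x :=
  (dotProductBilin ℝ ℝ).fderiv_of_bilinear_apply hf hg v

end ProductRules

namespace Matrix

variable {R : Type*} [CommRing R]

def curl (A : Matrix (Fin 3) (Fin 3) R) : Fin 3 → R :=
  ![A 2 1 - A 1 2, A 0 2 - A 2 0, A 1 0 - A 0 1]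

def crossMatrix (a : Fin 3 → R) : Matrix (Fin 3) (Fin 3) R :=
  !![0, -a 2, a 1; a 2, 0, -a 0; -a 1, a 0, 0]

theorem crossMatrix_mulVec (a v : Fin 3 → R) : crossMatrix a *ᵥ v = a ⨯₃ v := by
  ext i; fin_cases i <;> simp [crossMatrix, cross_apply, mulVec, dotProduct, Fin.sum_univ_three]
    <;> ring

theorem curl_sub (A B : Matrix (Fin 3) (Fin 3) R) : (A - B).curl = A.curl - B.curl := by
  ext i; fin_cases i <;> simp [curl, sub_sub_sub_comm]

theorem cross_curl (a : Fin 3 → R) (A : Matrix (Fin 3) (Fin 3) R) :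
    a ⨯₃ A.curl = Aᵀ *ᵥ a - A *ᵥ a := by
  ext i; fin_cases i <;> simp [curl, cross_apply, mulVec, dotProduct, Fin.sum_univ_three] <;> ring

theorem curl_crossMatrix_mul (a : Fin 3 → R) (A : Matrix (Fin 3) (Fin 3) R) :
    (crossMatrix a * A).curl = A.trace • a - A *ᵥ a := by
  ext i
  fin_cases i <;>
    simp [curl, crossMatrix, trace, mul_apply, mulVec, dotProduct, Fin.sum_univ_three] <;> ring

end Matrix

section VectorCalculus

variable {F β u : (Fin 3 → ℝ) → Fin 3 → ℝ} {x : Fin 3 → ℝ}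

theorem vcurl_eq_curl_vjac : vcurl F x = (vjac F x).curl := rfl

theorem vdiv_eq_trace_vjac : vdiv F x = (vjac F x).trace := rfl

theorem vjac_mulVec (v : Fin 3 → ℝ) : vjac F x *ᵥ v = fderiv ℝ F x v := by
  have h : vjac F x = LinearMap.toMatrix' (fderiv ℝ F x : (Fin 3 → ℝ) →ₗ[ℝ] Fin 3 → ℝ) := by
    ext i j
    rw [LinearMap.toMatrix'_apply]
    rfl
  rw [h, LinearMap.toMatrix'_mulVec]
  rfl

theorem vjac_crossProduct (hβ : DifferentiableAt ℝ β x) (hu : DifferentiableAt ℝ u x) :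
    vjac (fun y => β y ⨯₃ u y) x =
      crossMatrix (β x) * vjac u x - crossMatrix (u x) * vjac β x := by
  refine ext_iff_mulVec.mpr fun v => ?_
  rw [vjac_mulVec, fderiv_crossProduct_apply hβ hu, sub_mulVec, ← mulVec_mulVec, ← mulVec_mulVec,
    crossMatrix_mulVec, crossMatrix_mulVec, vjac_mulVec, vjac_mulVec, sub_eq_add_neg,
    cross_anticomm]

theorem vgrad_dotProduct (hβ : DifferentiableAt ℝ β x) (hu : DifferentiableAt ℝ u x) :
    vgrad (fun y => β y ⬝ᵥ u y) x = (vjac u x)ᵀ *ᵥ β x + (vjac β x)ᵀ *ᵥ u x := by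
  ext i
  rw [vgrad, fderiv_dotProduct_apply hβ hu, ← vjac_mulVec, ← vjac_mulVec, mulVec_transpose,
    mulVec_transpose, Pi.add_apply, dotProduct_comm (vjac β x *ᵥ _), dotProduct_mulVec,
    dotProduct_mulVec, dotProduct_single_one, dotProduct_single_one]

end VectorCalculus

/-- for `C¹` fields `u` and `β` on an open set `Ω ⊆ ℝ³`, the pointwise
identity `L_β u + 𝓛_β u = -(∇·β) u + (∇β + (∇β)ᵀ) u` holds on `Ω`. -/
theorem stmt_0 (Ω : Set (Fin 3 → ℝ)) (hΩ : IsOpen Ω)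
    (u β : (Fin 3 → ℝ) → (Fin 3 → ℝ))
    (hu : ContDiffOn ℝ 1 u Ω) (hβ : ContDiffOn ℝ 1 β Ω) :
    ∀ x ∈ Ω,
      magAdv β u x + magAdvDual β u x =
        -(vdiv β x) • u x + (vjac β x + (vjac β x)ᵀ).mulVec (u x) := by
  intro x hx
  have hud : DifferentiableAt ℝ u x :=
    (hu.contDiffAt (hΩ.mem_nhds hx)).differentiableAt one_ne_zero
  have hβd : DifferentiableAt ℝ β x :=
    (hβ.contDiffAt (hΩ.mem_nhds hx)).differentiableAt one_ne_zero
  rw [magAdv, magAdvDual, vgrad_dotProduct hβd hud, vcurl_eq_curl_vjac, vcurl_eq_curl_vjac,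
    vjac_crossProduct hβd hud, curl_sub, curl_crossMatrix_mul, curl_crossMatrix_mul, cross_curl,
    vdiv_eq_trace_vjac, vdiv_eq_trace_vjac, add_mulVec]
  module
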